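/- t-evolution of the transfer function of a KdV vessel (bounded case): in the bounded KdV vessel setting, let λ ∈ ℂ be such that λ·I − A is invertible, and define S(λ,x,t) := I − C(x,t)∘X(x,t)⁻¹∘(λ·I − A)⁻¹∘B(x,t)∘σ₁ and H₀(x,t) := C(x,t)∘X(x,t)⁻¹∘B(x,t). Then for all (x,t) ∈ ℝ², ∂ₜ S(λ,x,t) = iλ ∂ₓ S(λ,x,t) + i ∂ₓ[H₀](x,t) σ₁ S(λ,x,t). -/

import Mathlib

/-!
The t-equations of the vessel are its x-equations twisted by the main operators:
`∂ₜB = i A ∂ₓB`, `∂ₜC = -i ∂ₓC Aζ`, and, since `A B σ₂ = -∂ₓB σ₁ - B γ`,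
`∂ₜX = -i (∂ₓB σ₁ C + ∂ₓX Aζ)`. Differentiating `S` and `H₀` by the product rule (with
`∂X⁻¹ = -X⁻¹ ∂X X⁻¹`), the terms containing `Aζ X⁻¹` are removed by the Lyapunov equation,
`Aζ X⁻¹ = -X⁻¹ A - X⁻¹ B σ₁ C X⁻¹`, and those containing `A` next to the resolvent
`R = (λ - A)⁻¹` by `A R = R A = λ R - 1`; what remains is `iλ ∂ₓS + i ∂ₓH₀ σ₁ S` term by term.
-/

open ContinuousLinearMap

section Calculus

variable {𝕜 𝕜' : Type*} [NontriviallyNormedField 𝕜] [NontriviallyNormedField 𝕜']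
  [NormedAlgebra 𝕜 𝕜'] {E F G : Type*} [NormedAddCommGroup E] [NormedSpace 𝕜' E]
  [NormedAddCommGroup F] [NormedSpace 𝕜 F] [NormedSpace 𝕜' F] [IsScalarTower 𝕜 𝕜' F]
  [NormedAddCommGroup G] [NormedSpace 𝕜 G] [NormedSpace 𝕜' G] [IsScalarTower 𝕜 𝕜' G]
  {x : 𝕜}

theorem HasDerivAt.clm_comp_of_isScalarTower {c : 𝕜 → F →L[𝕜'] G} {d : 𝕜 → E →L[𝕜'] F}
    {c' : F →L[𝕜'] G} {d' : E →L[𝕜'] F} (hc : HasDerivAt c c' x) (hd : HasDerivAt d d' x) :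
    HasDerivAt (fun y => c y ∘L d y) (c' ∘L d x + c x ∘L d') x := by
  simpa [add_comm] using
    ((compL 𝕜' E F G).bilinearRestrictScalars 𝕜).hasDerivAt_of_bilinear (fun _ => hc) (fun _ => hd)

theorem HasDerivAt.clm_comp_comp {c : 𝕜 → F →L[𝕜'] G} {p : 𝕜 → F →L[𝕜'] F}
    {q : 𝕜 → E →L[𝕜'] F} {c' : F →L[𝕜'] G} {p' : F →L[𝕜'] F} {q' : E →L[𝕜'] F}
    (hc : HasDerivAt c c' x) (hp : HasDerivAt p p' x) (hq : HasDerivAt q q' x) :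
    HasDerivAt (fun y => c y ∘L p y ∘L q y)
      (c' ∘L p x ∘L q x + c x ∘L p' ∘L q x + c x ∘L p x ∘L q') x := by
  simpa only [comp_add, add_assoc] using
    hc.clm_comp_of_isScalarTower (hp.clm_comp_of_isScalarTower hq)

theorem HasDerivAt.inverse_of_comp_eq_one [CompleteSpace F] {X P : 𝕜 → F →L[𝕜'] F}
    {X' : F →L[𝕜'] F} (hX : HasDerivAt X X' x) (hXP : ∀ y, X y ∘L P y = 1)
    (hPX : ∀ y, P y ∘L X y = 1) :
    HasDerivAt P (-(P x ∘L X' ∘L P x)) x := by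
  let u : 𝕜 → (F →L[𝕜'] F)ˣ := fun y => ⟨X y, P y, hXP y, hPX y⟩
  have hP : Ring.inverse ∘ X = P := funext fun y => Ring.inverse_unit (u y)
  have h := ((hasFDerivAt_ringInverse (𝕜 := 𝕜') (u x)).restrictScalars 𝕜).comp_hasDerivAt x hX
  rw [hP] at h
  exact h

theorem HasDerivAt.one_sub_clm_comp_comp_comp {c : 𝕜 → F →L[𝕜'] G} {p : 𝕜 → F →L[𝕜'] F}
    {b : 𝕜 → G →L[𝕜'] F} {c' : F →L[𝕜'] G} {p' : F →L[𝕜'] F} {b' : G →L[𝕜'] F}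
    (hc : HasDerivAt c c' x) (hp : HasDerivAt p p' x) (hb : HasDerivAt b b' x)
    (R : F →L[𝕜'] F) (σ : G →L[𝕜'] G) :
    HasDerivAt (fun y => 1 - c y ∘L p y ∘L R ∘L b y ∘L σ)
      (-(c' ∘L p x ∘L R ∘L b x ∘L σ + c x ∘L p' ∘L R ∘L b x ∘L σ +
        c x ∘L p x ∘L R ∘L b' ∘L σ)) x := by
  have hq : HasDerivAt (fun y => R ∘L b y ∘L σ) (R ∘L b' ∘L σ) x := by
    simpa using (hasDerivAt_const x R).clm_comp_of_isScalarTower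
      (hb.clm_comp_of_isScalarTower (hasDerivAt_const x σ))
  exact ((hasDerivAt_const x 1).sub (hc.clm_comp_comp hp hq)).congr_deriv (zero_sub _)

end Calculus

section OperatorAlgebra

variable {𝕜 : Type*} [NontriviallyNormedField 𝕜] {D E F G : Type*}
  [NormedAddCommGroup D] [NormedSpace 𝕜 D] [NormedAddCommGroup E] [NormedSpace 𝕜 E]
  [NormedAddCommGroup F] [NormedSpace 𝕜 F] [NormedAddCommGroup G] [NormedSpace 𝕜 G]

theorem ContinuousLinearMap.comp_comp_of_comp_eq {f : F →L[𝕜] G} {g : E →L[𝕜] F}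
    {h : E →L[𝕜] G} (hfg : f ∘L g = h) (w : D →L[𝕜] E) : f ∘L g ∘L w = h ∘L w := by
  rw [← comp_assoc, hfg]

theorem comp_resolvent_eq {A R : E →L[𝕜] E} {l : 𝕜} (hR : (l • (1 : E →L[𝕜] E) - A) ∘L R = 1) :
    A ∘L R = l • R - 1 := by
  rw [← hR, sub_comp, smul_comp, one_def, id_comp, sub_sub_cancel]

theorem resolvent_comp_eq {A R : E →L[𝕜] E} {l : 𝕜} (hR : R ∘L (l • (1 : E →L[𝕜] E) - A) = 1) :
    R ∘L A = l • R - 1 := by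
  rw [← hR, comp_sub, comp_smul, one_def, comp_id, sub_sub_cancel]

theorem comp_inverse_eq_of_lyapunov {A Aζ X P : F →L[𝕜] F} {b : E →L[𝕜] F} {c : F →L[𝕜] E}
    {σ : E →L[𝕜] E} (hXP : X ∘L P = 1) (hPX : P ∘L X = 1)
    (hlyap : A ∘L X + X ∘L Aζ + (b ∘L σ) ∘L c = 0) :
    Aζ ∘L P = -(P ∘L A) - P ∘L b ∘L σ ∘L c ∘L P := by
  have hXAζ : X ∘L Aζ = -(A ∘L X) - b ∘L σ ∘L c := by
    rw [← sub_eq_zero, ← hlyap]; simp only [comp_assoc]; abel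
  calc Aζ ∘L P = P ∘L (X ∘L Aζ) ∘L P := by
        rw [← comp_assoc, ← comp_assoc, hPX, one_def, id_comp]
    _ = -(P ∘L A) - P ∘L b ∘L σ ∘L c ∘L P := by
        rw [hXAζ]
        simp only [sub_comp, neg_comp, comp_sub, comp_neg, comp_assoc, hXP, one_def, comp_id]

end OperatorAlgebra

section KdV

variable {E F : Type*} [NormedAddCommGroup E] [NormedSpace ℂ E] [NormedAddCommGroup F]
  [NormedSpace ℂ F]

theorem transfer_t_derivative_eq {σ₁ : E →L[ℂ] E} {A Aζ P R xx xt : F →L[ℂ] F}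
    {b bx bt : E →L[ℂ] F} {c cx ct : F →L[ℂ] E} {l : ℂ}
    (hAζ : Aζ ∘L P = -(P ∘L A) - P ∘L b ∘L σ₁ ∘L c ∘L P)
    (hAR : A ∘L R = l • R - 1) (hRA : R ∘L A = l • R - 1)
    (hbt : bt = Complex.I • A ∘L bx) (hct : ct = -Complex.I • cx ∘L Aζ)
    (hxt : xt = -Complex.I • (bx ∘L σ₁ ∘L c + xx ∘L Aζ)) :
    -(ct ∘L P ∘L R ∘L b ∘L σ₁ + c ∘L (-(P ∘L xt ∘L P)) ∘L R ∘L b ∘L σ₁ +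
        c ∘L P ∘L R ∘L bt ∘L σ₁) =
      (Complex.I * l) • -(cx ∘L P ∘L R ∘L b ∘L σ₁ + c ∘L (-(P ∘L xx ∘L P)) ∘L R ∘L b ∘L σ₁ +
        c ∘L P ∘L R ∘L bx ∘L σ₁) +
      Complex.I • ((cx ∘L P ∘L b + c ∘L (-(P ∘L xx ∘L P)) ∘L b + c ∘L P ∘L bx) ∘L σ₁ ∘L
        (1 - c ∘L P ∘L R ∘L b ∘L σ₁)) := by
  subst hbt hct hxt
  simp only [comp_comp_of_comp_eq hAζ, comp_comp_of_comp_eq hAR, comp_comp_of_comp_eq hRA,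
    comp_assoc, comp_add, add_comp, comp_sub, sub_comp, comp_neg, neg_comp, comp_smul, smul_comp,
    one_def, comp_id, id_comp]
  module

theorem kdv_X_t_derivative_eq {σ₁ σ₁inv σ₂ γ : E →L[ℂ] E} {A Aζ : F →L[ℂ] F}
    {b : E →L[ℂ] F} {c : F →L[ℂ] E} (hσ₁ : σ₁inv ∘L σ₁ = 1) :
    Complex.I • (A ∘L (b ∘L σ₂) ∘L c - ((b ∘L σ₂) ∘L c) ∘L Aζ + (b ∘L γ) ∘L c) =
      -Complex.I • ((-((A ∘L b) ∘L σ₂ + b ∘L γ)) ∘L σ₁inv ∘L σ₁ ∘L c + ((b ∘L σ₂) ∘L c) ∘L Aζ) := by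
  simp only [comp_comp_of_comp_eq hσ₁, one_def, id_comp, neg_comp, add_comp, comp_assoc]
  module

end KdV

theorem kdv_transfer_function_t_evolution_general
    {H : Type*} [NormedAddCommGroup H] [InnerProductSpace ℂ H] [CompleteSpace H]
    (σ₁ σ₁inv σ₂ γ : (Fin 2 → ℂ) →L[ℂ] (Fin 2 → ℂ))
    (hσ₁inv : σ₁inv ∘L σ₁ = 1)
    (A Aζ : H →L[ℂ] H)
    (B : ℝ → ℝ → ((Fin 2 → ℂ) →L[ℂ] H))
    (C : ℝ → ℝ → (H →L[ℂ] (Fin 2 → ℂ)))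
    (X Xinv : ℝ → ℝ → (H →L[ℂ] H))
    (hXinv : ∀ x t : ℝ, X x t ∘L Xinv x t = 1)
    (hXinv' : ∀ x t : ℝ, Xinv x t ∘L X x t = 1)
    (hBx : ∀ x t : ℝ, HasDerivAt (fun y => B y t)
      ((-((A ∘L B x t) ∘L σ₂ + B x t ∘L γ)) ∘L σ₁inv) x)
    (hCx : ∀ x t : ℝ, HasDerivAt (fun y => C y t)
      (σ₁inv ∘L (-(σ₂ ∘L (C x t ∘L Aζ)) + γ ∘L C x t)) x)
    (hXx : ∀ x t : ℝ, HasDerivAt (fun y => X y t) ((B x t ∘L σ₂) ∘L C x t) x)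
    (hBt : ∀ x t : ℝ, HasDerivAt (fun s => B x s)
      ((-Complex.I) • (A ∘L (((A ∘L B x t) ∘L σ₂ + B x t ∘L γ) ∘L σ₁inv))) t)
    (hCt : ∀ x t : ℝ, HasDerivAt (fun s => C x s)
      ((-Complex.I) • ((σ₁inv ∘L (-(σ₂ ∘L (C x t ∘L Aζ)) + γ ∘L C x t)) ∘L Aζ)) t)
    (hXt : ∀ x t : ℝ, HasDerivAt (fun s => X x s)
      (Complex.I • (A ∘L ((B x t ∘L σ₂) ∘L C x t)
        - ((B x t ∘L σ₂) ∘L C x t) ∘L Aζ + (B x t ∘L γ) ∘L C x t)) t)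
    (hLyap : ∀ x t : ℝ, A ∘L X x t + X x t ∘L Aζ + (B x t ∘L σ₁) ∘L C x t = 0)
    (l : ℂ) (R : H →L[ℂ] H)
    (hR : (l • (1 : H →L[ℂ] H) - A) ∘L R = 1)
    (hR' : R ∘L (l • (1 : H →L[ℂ] H) - A) = 1) :
    ∃ (Sx H0x : ℝ → ℝ → ((Fin 2 → ℂ) →L[ℂ] (Fin 2 → ℂ))),
      (∀ x t : ℝ, HasDerivAt
        (fun y => (1 : (Fin 2 → ℂ) →L[ℂ] (Fin 2 → ℂ))
          - C y t ∘L (Xinv y t ∘L (R ∘L (B y t ∘L σ₁)))) (Sx x t) x) ∧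
      (∀ x t : ℝ, HasDerivAt
        (fun y => C y t ∘L (Xinv y t ∘L B y t)) (H0x x t) x) ∧
      (∀ x t : ℝ, HasDerivAt
        (fun s => (1 : (Fin 2 → ℂ) →L[ℂ] (Fin 2 → ℂ))
          - C x s ∘L (Xinv x s ∘L (R ∘L (B x s ∘L σ₁))))
        ((Complex.I * l) • Sx x t +
          Complex.I • ((H0x x t ∘L σ₁) ∘L
            ((1 : (Fin 2 → ℂ) →L[ℂ] (Fin 2 → ℂ))
              - C x t ∘L (Xinv x t ∘L (R ∘L (B x t ∘L σ₁)))))) t) := by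
  have hPx := fun x t =>
    (hXx x t).inverse_of_comp_eq_one (fun y => hXinv y t) (fun y => hXinv' y t)
  have hPt := fun x t => (hXt x t).inverse_of_comp_eq_one (hXinv x) (hXinv' x)
  refine ⟨_, _, fun x t => (hCx x t).one_sub_clm_comp_comp_comp (hPx x t) (hBx x t) R σ₁,
    fun x t => (hCx x t).clm_comp_comp (hPx x t) (hBx x t), fun x t => ?_⟩
  refine ((hCt x t).one_sub_clm_comp_comp_comp (hPt x t) (hBt x t) R σ₁).congr_deriv ?_
  exact transfer_t_derivative_eq (comp_inverse_eq_of_lyapunov (hXinv x t) (hXinv' x t) (hLyap x t))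
    (comp_resolvent_eq hR) (resolvent_comp_eq hR') (by rw [neg_comp, comp_neg]; module) rfl
    (kdv_X_t_derivative_eq hσ₁inv)

/-- **t-evolution of the transfer function of a KdV vessel (bounded case):**
with `S(λ,x,t) = I - C X⁻¹ (λI - A)⁻¹ B σ₁` and `H₀ = C X⁻¹ B`, one has
`∂ₜ S = iλ ∂ₓ S + i ∂ₓ[H₀] σ₁ S`. -/
theorem kdv_transfer_function_t_evolution
    {H : Type*} [NormedAddCommGroup H] [InnerProductSpace ℂ H] [CompleteSpace H]
    (σ₁ σ₁inv σ₂ γ : (Fin 2 → ℂ) →L[ℂ] (Fin 2 → ℂ))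
    (hσ₁ : σ₁ ∘L σ₁inv = 1) (hσ₁inv : σ₁inv ∘L σ₁ = 1)
    (A Aζ : H →L[ℂ] H)
    (B : ℝ → ℝ → ((Fin 2 → ℂ) →L[ℂ] H))
    (C : ℝ → ℝ → (H →L[ℂ] (Fin 2 → ℂ)))
    (X Xinv : ℝ → ℝ → (H →L[ℂ] H))
    (hXinv : ∀ x t : ℝ, X x t ∘L Xinv x t = 1)
    (hXinv' : ∀ x t : ℝ, Xinv x t ∘L X x t = 1)
    (hBx : ∀ x t : ℝ, HasDerivAt (fun y => B y t)
      ((-((A ∘L B x t) ∘L σ₂ + B x t ∘L γ)) ∘L σ₁inv) x)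
    (hCx : ∀ x t : ℝ, HasDerivAt (fun y => C y t)
      (σ₁inv ∘L (-(σ₂ ∘L (C x t ∘L Aζ)) + γ ∘L C x t)) x)
    (hXx : ∀ x t : ℝ, HasDerivAt (fun y => X y t) ((B x t ∘L σ₂) ∘L C x t) x)
    (hBt : ∀ x t : ℝ, HasDerivAt (fun s => B x s)
      ((-Complex.I) • (A ∘L (((A ∘L B x t) ∘L σ₂ + B x t ∘L γ) ∘L σ₁inv))) t)
    (hCt : ∀ x t : ℝ, HasDerivAt (fun s => C x s)
      ((-Complex.I) • ((σ₁inv ∘L (-(σ₂ ∘L (C x t ∘L Aζ)) + γ ∘L C x t)) ∘L Aζ)) t)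
    (hXt : ∀ x t : ℝ, HasDerivAt (fun s => X x s)
      (Complex.I • (A ∘L ((B x t ∘L σ₂) ∘L C x t)
        - ((B x t ∘L σ₂) ∘L C x t) ∘L Aζ + (B x t ∘L γ) ∘L C x t)) t)
    (hLyap : ∀ x t : ℝ, A ∘L X x t + X x t ∘L Aζ + (B x t ∘L σ₁) ∘L C x t = 0)
    (l : ℂ) (R : H →L[ℂ] H)
    (hR : (l • (1 : H →L[ℂ] H) - A) ∘L R = 1)
    (hR' : R ∘L (l • (1 : H →L[ℂ] H) - A) = 1) :
    ∃ (Sx H0x : ℝ → ℝ → ((Fin 2 → ℂ) →L[ℂ] (Fin 2 → ℂ))),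
      (∀ x t : ℝ, HasDerivAt
        (fun y => (1 : (Fin 2 → ℂ) →L[ℂ] (Fin 2 → ℂ))
          - C y t ∘L (Xinv y t ∘L (R ∘L (B y t ∘L σ₁)))) (Sx x t) x) ∧
      (∀ x t : ℝ, HasDerivAt
        (fun y => C y t ∘L (Xinv y t ∘L B y t)) (H0x x t) x) ∧
      (∀ x t : ℝ, HasDerivAt
        (fun s => (1 : (Fin 2 → ℂ) →L[ℂ] (Fin 2 → ℂ))
          - C x s ∘L (Xinv x s ∘L (R ∘L (B x s ∘L σ₁))))
        ((Complex.I * l) • Sx x t +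
          Complex.I • ((H0x x t ∘L σ₁) ∘L
            ((1 : (Fin 2 → ℂ) →L[ℂ] (Fin 2 → ℂ))
              - C x t ∘L (Xinv x t ∘L (R ∘L (B x t ∘L σ₁)))))) t) :=
  kdv_transfer_function_t_evolution_general σ₁ σ₁inv σ₂ γ hσ₁inv A Aζ B C X Xinv hXinv hXinv' hBx
    hCx hXx hBt hCt hXt hLyap l R hR hR'
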